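/- For every prime p with p ≥ 5, there exists an integer G such that 2 · ∑_{j=1}^{p−1} ∏_{k=1, k≠j}^{p−1} k = p · G and p divides G. -/

import Mathlib

/-!
Pairing `j` with `p - j` gives `2 ∑ⱼ ∏_{k ≠ j} k = p ∑ⱼ Qⱼ` with `Qⱼ = ∏_{k ≠ j, p - j} k`.
Modulo `p` one has `Qⱼ = -(p - 1)! / j²`, so
`∑ⱼ Qⱼ ≡ -(p - 1)! ∑_{x ∈ 𝔽ₚ} x⁻² = -(p - 1)! ∑_{x ∈ 𝔽ₚ} x²` (using `0⁻¹ = 0`),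
and a power sum `∑ x ^ i` over `𝔽_q` vanishes for `i < q - 1`, here `2 < p - 1`.
-/

open Finset

theorem Finset.two_mul_sum_prod_erase_eq_of_involution {ι R : Type*} [DecidableEq ι]
    [CommSemiring R] {s : Finset ι} {σ : ι → ι} (f : ι → R) (c : R)
    (hσ : ∀ j ∈ s, σ j ∈ s) (hσσ : ∀ j ∈ s, σ (σ j) = j) (hne : ∀ j ∈ s, σ j ≠ j)
    (hc : ∀ j ∈ s, f j + f (σ j) = c) :
    2 * ∑ j ∈ s, ∏ k ∈ s.erase j, f k =
      c * ∑ j ∈ s, ∏ k ∈ (s.erase j).erase (σ j), f k := by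
  have hreindex : ∑ j ∈ s, ∏ k ∈ s.erase j, f k = ∑ j ∈ s, ∏ k ∈ s.erase (σ j), f k :=
    (sum_nbij' σ σ hσ hσ hσσ hσσ fun _ _ => rfl).symm
  have hpair : ∀ j ∈ s, ∏ k ∈ s.erase j, f k + ∏ k ∈ s.erase (σ j), f k
      = c * ∏ k ∈ (s.erase j).erase (σ j), f k := by
    intro j hj
    rw [← mul_prod_erase (s.erase j) f (mem_erase.2 ⟨hne j hj, hσ j hj⟩),
      ← mul_prod_erase (s.erase (σ j)) f (mem_erase.2 ⟨(hne j hj).symm, hj⟩),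
      erase_right_comm, ← hc j hj]
    ring
  rw [two_mul]
  nth_rw 2 [hreindex]
  rw [← sum_add_distrib, sum_congr rfl hpair, mul_sum]

theorem Finset.prod_erase_erase_eq_div {ι K : Type*} [DecidableEq ι] [Field K] {s : Finset ι}
    (f : ι → K) {a b : ι} (ha : a ∈ s) (hb : b ∈ s) (hba : b ≠ a) (hfa : f a ≠ 0)
    (hfb : f b ≠ 0) :
    ∏ k ∈ (s.erase a).erase b, f k = (∏ k ∈ s, f k) / (f a * f b) := by
  rw [eq_div_iff (mul_ne_zero hfa hfb), ← mul_prod_erase s f ha,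
    ← mul_prod_erase (s.erase a) f (mem_erase.2 ⟨hba, hb⟩)]
  ring

theorem FiniteField.sum_inv_pow_lt_card_sub_one (K : Type*) [Field K] [Fintype K] (i : ℕ)
    (h : i < Fintype.card K - 1) : ∑ x : K, x⁻¹ ^ i = 0 := by
  rw [← FiniteField.sum_pow_lt_card_sub_one K i h]
  exact Fintype.sum_equiv (Equiv.inv K) _ _ fun _ => rfl

theorem ZMod.sum_Icc_natCast_eq_sum_univ {n : ℕ} [NeZero n] {M : Type*} [AddCommMonoid M]
    (g : ZMod n → M) (hg : g 0 = 0) :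
    ∑ j ∈ Icc 1 (n - 1), g j = ∑ x : ZMod n, g x := by
  have hn := NeZero.pos n
  have hrange : range n = insert 0 (Icc 1 (n - 1)) := by
    ext x
    simp only [mem_range, mem_insert, mem_Icc]
    omega
  calc ∑ j ∈ Icc 1 (n - 1), g j = ∑ j ∈ range n, g j := by
        rw [hrange, sum_insert (by simp), Nat.cast_zero, hg, zero_add]
    _ = ∑ x : ZMod n, g x :=
        sum_nbij' (fun j => (j : ZMod n)) ZMod.val (fun _ _ => mem_univ _)
          (fun x _ => mem_range.2 (ZMod.val_lt x))
          (fun j hj => ZMod.val_natCast_of_lt (mem_range.1 hj))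
          (fun x _ => ZMod.natCast_zmod_val x) fun _ _ => rfl

theorem ZMod.sum_Icc_inv_sq_eq_zero {p : ℕ} [Fact p.Prime] (h5 : 5 ≤ p) :
    ∑ j ∈ Icc 1 (p - 1), ((j : ZMod p)⁻¹) ^ 2 = 0 := by
  rw [ZMod.sum_Icc_natCast_eq_sum_univ (fun x : ZMod p => x⁻¹ ^ 2) (by simp)]
  exact FiniteField.sum_inv_pow_lt_card_sub_one _ 2 (by rw [ZMod.card]; omega)

section Reflection

variable {p j : ℕ}

theorem Nat.sub_mem_Icc_one_sub_one (hj : j ∈ Icc 1 (p - 1)) : p - j ∈ Icc 1 (p - 1) := by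
  simp only [mem_Icc] at hj ⊢
  omega

theorem Odd.sub_ne_self (hp : Odd p) : p - j ≠ j := by
  obtain ⟨k, rfl⟩ := hp
  omega

theorem ZMod.natCast_ne_zero_of_mem_Icc (hj : j ∈ Icc 1 (p - 1)) : (j : ZMod p) ≠ 0 := by
  simp only [mem_Icc] at hj
  rw [Ne, ZMod.natCast_eq_zero_iff]
  exact fun hdvd => absurd (Nat.le_of_dvd (by omega) hdvd) (by omega)

theorem ZMod.natCast_sub_eq_neg (hj : j ≤ p) : ((p - j : ℕ) : ZMod p) = -j := by
  rw [Nat.cast_sub hj, ZMod.natCast_self, zero_sub]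

end Reflection

theorem harmonic_sum_quotient (p : ℕ) (hp : p.Prime) (h5 : 5 ≤ p) :
    ∃ G : ℤ,
      2 * (∑ j ∈ Finset.Icc 1 (p - 1), ∏ k ∈ (Finset.Icc 1 (p - 1)).erase j, (k : ℤ)) =
          (p : ℤ) * G ∧ (p : ℤ) ∣ G := by
  have : Fact p.Prime := ⟨hp⟩
  set F := Icc 1 (p - 1)
  have hle : ∀ j ∈ F, j ≤ p := fun j hj => by simp only [F, mem_Icc] at hj; omega
  have hflip_ne : ∀ j ∈ F, p - j ≠ j := fun _ _ => (hp.odd_of_ne_two (by omega)).sub_ne_self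
  refine ⟨_, two_mul_sum_prod_erase_eq_of_involution (fun k : ℕ => (k : ℤ)) (p : ℤ)
    (fun _ => Nat.sub_mem_Icc_one_sub_one) (fun j hj => Nat.sub_sub_self (hle j hj)) hflip_ne
    fun j hj => by push_cast [Nat.cast_sub (hle j hj)]; ring, ?_⟩
  rw [← ZMod.intCast_zmod_eq_zero_iff_dvd]
  push_cast
  have hquot : ∀ j ∈ F, ∏ k ∈ (F.erase j).erase (p - j), (k : ZMod p)
      = -(∏ k ∈ F, (k : ZMod p)) * ((j : ZMod p)⁻¹) ^ 2 := fun j hj => by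
    rw [prod_erase_erase_eq_div _ hj (Nat.sub_mem_Icc_one_sub_one hj) (hflip_ne j hj)
      (ZMod.natCast_ne_zero_of_mem_Icc hj)
      (ZMod.natCast_ne_zero_of_mem_Icc (Nat.sub_mem_Icc_one_sub_one hj)),
      ZMod.natCast_sub_eq_neg (hle j hj)]
    field_simp
  rw [sum_congr rfl hquot, ← mul_sum, ZMod.sum_Icc_inv_sq_eq_zero h5, mul_zero]
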